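/- Let 𝔓 be a Borel subset of I and X a family of bounded, uniformly continuous options with pricing functional P. Then for every bounded Borel G : Ω → ℝ, Ṽ^sp_{X,P,𝔓}(G) = inf_{N ≥ 0} Ṽ^sp_{X,P,I}(G − N·λ_𝔓), where λ_𝔓(ω) := (inf_{υ∈𝔓} ‖ω − υ‖) ∧ 1. -/

import Mathlib

open MeasureTheory Set Filter

noncomputable section

namespace RobustFinance

/-- Continuous nonnegative paths on `[0,T]` (extended constantly outside `[0,T]`),
starting at `(1,…,1)`.  As a subtype of the bounded continuous functions, the induced
metric is exactly the sup-norm distance `sup_{0 ≤ t ≤ T} max_i |ω_i(t) − υ_i(t)|`. -/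
def Path (T : ℝ) (m : ℕ) : Type :=
  {ω : BoundedContinuousFunction ℝ (Fin m → ℝ) //
    (∀ t i, 0 ≤ ω t i) ∧ (∀ i, ω 0 i = 1) ∧
    (∀ t, t ≤ 0 → ω t = ω 0) ∧ (∀ t, T ≤ t → ω t = ω T)}

instance instMetricPath (T : ℝ) (m : ℕ) : MetricSpace (Path T m) := by
  unfold Path; infer_instance

instance instMeasPath (T : ℝ) (m : ℕ) : MeasurableSpace (Path T m) := borel _

instance instBorelPath (T : ℝ) (m : ℕ) : BorelSpace (Path T m) := ⟨rfl⟩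

variable {T : ℝ} {m : ℕ}

/-- The canonical (coordinate) process `S_t(ω) = ω_t`. -/
def proc (T : ℝ) (m : ℕ) (t : ℝ) (ω : Path T m) : Fin m → ℝ := ω.1 t

lemma measurable_proc (T : ℝ) (m : ℕ) (t : ℝ) : Measurable (proc T m t) := by
  have h1 : Continuous fun ω : Path T m =>
      (ω.1 : BoundedContinuousFunction ℝ (Fin m → ℝ)) := continuous_subtype_val
  exact ((continuous_eval_const t).comp h1).measurable

/-- The natural filtration of the canonical process. -/
def natFilt (T : ℝ) (m : ℕ) : Filtration ℝ (instMeasPath T m) where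
  seq t := ⨆ u ∈ Set.Icc (0:ℝ) t, MeasurableSpace.comap (proc T m u) inferInstance
  mono' := fun _ _ hst => biSup_mono fun u hu => ⟨hu.1, hu.2.trans hst⟩
  le' := fun _ => iSup₂_le fun u _ => measurable_iff_comap_le.mp (measurable_proc T m u)

/-- A martingale measure: a Borel probability measure on the path space under which the
canonical process is an integrable martingale in its natural filtration. -/
def IsMartingaleMeasure (μ : Measure (Path T m)) : Prop :=
  IsProbabilityMeasure μ ∧ (∀ t : ℝ, Integrable (proc T m t) μ) ∧
    Martingale (proc T m) (natFilt T m) μ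

/-- Martingale measures giving full mass to a set `I`. -/
def MI (T : ℝ) (m : ℕ) (I : Set (Path T m)) : Set (Measure (Path T m)) :=
  {μ | IsMartingaleMeasure μ ∧ μ I = 1}

/-- First `d` coordinates of a `d+K` dimensional vector. -/
def liftFin (d K : ℕ) (x : Fin (d + K) → ℝ) : Fin d → ℝ := fun j => x (Fin.castAdd K j)

/-- The information space determined by `K` continuously traded options on the
first `d` coordinates, with given initial prices. -/
def InfoSpace (T : ℝ) (d K : ℕ) (Xc : Fin K → (Fin d → ℝ) → ℝ) (pc : Fin K → ℝ) :
    Set (Path T (d + K)) :=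
  {ω | ∀ i : Fin K, ω.1 T (Fin.natAdd d i) = Xc i (liftFin d K (ω.1 T)) / pc i}

/-- Standing regularity assumptions on the continuously traded options: positive prices and
nonnegative, bounded and uniformly continuous payoffs on the nonnegative orthant. -/
def OptionData (d K : ℕ) (Xc : Fin K → (Fin d → ℝ) → ℝ) (pc : Fin K → ℝ) : Prop :=
  ∀ i : Fin K, 0 < pc i ∧ (∀ x : Fin d → ℝ, (∀ j, 0 ≤ x j) → 0 ≤ Xc i x) ∧
    (∃ C, ∀ x : Fin d → ℝ, (∀ j, 0 ≤ x j) → |Xc i x| ≤ C) ∧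
    UniformContinuousOn (Xc i) {x | ∀ j, 0 ≤ x j}

/-- Assumption A1: either there are no continuously traded options, or all nearby prices of
the continuously traded options are attained by some martingale measure giving full mass to
the correspondingly re-scaled information space. -/
def AssumptionA1 (T : ℝ) (d K : ℕ) (Xc : Fin K → (Fin d → ℝ) → ℝ) (pc : Fin K → ℝ) : Prop :=
  K = 0 ∨ ∃ ε > (0:ℝ), ∀ p : Fin K → ℝ, (∀ i, |p i - pc i| ≤ ε) →
    ∃ μ : Measure (Path T (d + K)), IsMartingaleMeasure μ ∧ μ (InfoSpace T d K Xc p) = 1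

/-- A simple (piecewise constant in time) trading strategy: for each path, finitely
many rebalancing times `0 = s_0 < … < s_{num} = T` and holdings `c_k` on `(s_k, s_{k+1}]`. -/
structure SimpleStrategy (T : ℝ) (m : ℕ) where
  num : Path T m → ℕ
  time : Path T m → ℕ → ℝ
  coeff : Path T m → ℕ → Fin m → ℝ
  time_zero : ∀ ω, time ω 0 = 0
  time_last : ∀ ω, time ω (num ω) = T
  time_mono : ∀ ω, StrictMonoOn (time ω) (Set.Iic (num ω))

/-- The holdings of a simple strategy at time `t`:
`γ(ω)_t = Σ_k c_k(ω)·1_{(s_k(ω), s_{k+1}(ω)]}(t)`. -/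
def SimpleStrategy.holding (γ : SimpleStrategy T m) (ω : Path T m) (t : ℝ) : Fin m → ℝ :=
  ∑ k ∈ Finset.range (γ.num ω),
    Set.indicator (Set.Ioc (γ.time ω k) (γ.time ω (k + 1))) (fun _ => γ.coeff ω k) t

/-- The pathwise gains `(γ·ω)_t = Σ_k c_k(ω)·(ω_{s_{k+1}∧t} − ω_{s_k∧t})`. -/
def SimpleStrategy.gains (γ : SimpleStrategy T m) (ω : Path T m) (t : ℝ) : ℝ :=
  ∑ k ∈ Finset.range (γ.num ω), ∑ i,
    γ.coeff ω k i * (ω.1 (min (γ.time ω (k + 1)) t) i - ω.1 (min (γ.time ω k) t) i)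

/-- Non-anticipativity: the holdings at time `t` only depend on the path up to time `t`. -/
def SimpleStrategy.NonAnticipative (γ : SimpleStrategy T m) : Prop :=
  ∀ ω υ : Path T m, ∀ t ∈ Set.Icc (0:ℝ) T,
    (∀ u ∈ Set.Icc (0:ℝ) t, ω.1 u = υ.1 u) → γ.holding ω t = γ.holding υ t

/-- Admissibility on a set `A`: non-anticipative with gains uniformly bounded below on `A`. -/
def SimpleStrategy.AdmissibleOn (γ : SimpleStrategy T m) (A : Set (Path T m)) : Prop :=
  γ.NonAnticipative ∧ ∃ M > (0:ℝ), ∀ ω ∈ A, ∀ t ∈ Set.Icc (0:ℝ) T, -M ≤ γ.gains ω t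

/-- Superhedging cost using simple strategies (admissible on `I`, superreplicating on `A`). -/
def Vsp (I A : Set (Path T m)) (G : Path T m → ℝ) : ℝ :=
  sInf {x : ℝ | ∃ γ : SimpleStrategy T m, γ.AdmissibleOn I ∧ ∀ ω ∈ A, G ω ≤ x + γ.gains ω T}

/-- Supremum of the expectations of `G` over a set of measures. -/
def Psup (MM : Set (Measure (Path T m))) (G : Path T m → ℝ) : ℝ :=
  sSup ((fun μ => ∫ ω, G ω ∂μ) '' MM)

/-- `ε`-enlargement of `𝔓` inside `I`. -/
def enlarge (I P : Set (Path T m)) (ε : ℝ) : Set (Path T m) :=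
  {ω ∈ I | Metric.infDist ω P ≤ ε}

/-- Approximate superhedging cost (no static options): superreplication on some `𝔓^ε`. -/
def VspApprox (I P : Set (Path T m)) (G : Path T m → ℝ) : ℝ :=
  sInf {x : ℝ | ∃ ε > (0:ℝ), ∃ γ : SimpleStrategy T m, γ.AdmissibleOn I ∧
    ∀ ω ∈ enlarge I P ε, G ω ≤ x + γ.gains ω T}

/-- `λ_𝔓(ω) = (inf_{υ ∈ 𝔓} ‖ω − υ‖) ∧ 1`. -/
def lamP (P : Set (Path T m)) (ω : Path T m) : ℝ := min (Metric.infDist ω P) 1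

/-- Sup norm `‖ω‖ = sup_{0≤t≤T} max_i |ω^{(i)}_t|` of a path. -/
def pathNorm (ω : Path T m) : ℝ := ‖ω.1‖

/-- `‖ω^{(i)}‖ = sup_{0 ≤ t ≤ T} ω^{(i)}_t`. -/
def coordSup (ω : Path T m) (i : Fin m) : ℝ := ⨆ t : Set.Icc (0:ℝ) T, ω.1 t.1 i

/-- Running supremum `sup_{0 ≤ u ≤ t} max_i |ω^{(i)}_u|`. -/
def runSup (ω : Path T m) (t : ℝ) : ℝ := ⨆ u : Set.Icc (0:ℝ) t, ‖ω.1 u.1‖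

/-- Times of the `N`-th Lebesgue partition of a path (successive hitting times of moves of
size `2^{-N}`, capped at `T`). -/
def lebTime (N : ℕ) (ω : Path T m) : ℕ → ℝ
  | 0 => 0
  | k + 1 =>
      sInf ({t : ℝ | lebTime N ω k ≤ t ∧
        dist (ω.1 t) (ω.1 (lebTime N ω k)) = 1 / 2 ^ N} ∪ {T})

/-- The number `m^{(N)}(ω)` of steps of the `N`-th Lebesgue partition. -/
def lebCount (N : ℕ) (ω : Path T m) : ℕ := sInf {k : ℕ | lebTime N ω k = T}

/-- Superhedging cost with a semi-static simple strategy: a static position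
`a₀ + Σ_l a_l X_{idx l}` at cost `a₀ + Σ_l a_l 𝒫(X_{idx l})`, plus a simple admissible
dynamic strategy, together superreplicating `G` on `A`. -/
def VspSemi {ι : Type} (I A : Set (Path T m)) (pay : ι → Path T m → ℝ) (pr : ι → ℝ)
    (G : Path T m → ℝ) : ℝ :=
  sInf {x : ℝ | ∃ (n : ℕ) (a0 : ℝ) (a : Fin n → ℝ) (idx : Fin n → ι),
    x = a0 + ∑ l, a l * pr (idx l) ∧
    ∃ γ : SimpleStrategy T m, γ.AdmissibleOn I ∧
      ∀ ω ∈ A, G ω ≤ (a0 + ∑ l, a l * pay (idx l) ω) + γ.gains ω T}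

/-- Approximate semi-static superhedging cost: superreplication is only required on
some `ε`-enlargement `𝔓^ε` of the prediction set. -/
def VspSemiApprox {ι : Type} (I P : Set (Path T m)) (pay : ι → Path T m → ℝ) (pr : ι → ℝ)
    (G : Path T m → ℝ) : ℝ :=
  sInf {x : ℝ | ∃ ε > (0:ℝ), ∃ (n : ℕ) (a0 : ℝ) (a : Fin n → ℝ) (idx : Fin n → ι),
    x = a0 + ∑ l, a l * pr (idx l) ∧
    ∃ γ : SimpleStrategy T m, γ.AdmissibleOn I ∧
      ∀ ω ∈ enlarge I P ε, G ω ≤ (a0 + ∑ l, a l * pay (idx l) ω) + γ.gains ω T}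

/-- Calibrated market models: martingale measures supported on `I` and on the prediction
set `𝔓`, repricing all statically traded options. -/
def Calibrated {ι : Type} (I P : Set (Path T m)) (pay : ι → Path T m → ℝ) (pr : ι → ℝ) :
    Set (Measure (Path T m)) :=
  {μ | IsMartingaleMeasure μ ∧ μ I = 1 ∧ μ P = 1 ∧ ∀ i, (∫ ω, pay i ω ∂μ) = pr i}

/-- `η`-miscalibrated market models: `P(𝔓^η) > 1 − η` and `|E_P[X] − 𝒫(X)| < η` for all
statically traded options `X`. -/
def CalibratedEta {ι : Type} (I P : Set (Path T m)) (pay : ι → Path T m → ℝ) (pr : ι → ℝ)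
    (η : ℝ) : Set (Measure (Path T m)) :=
  {μ | IsMartingaleMeasure μ ∧ μ I = 1 ∧ 1 - η < (μ (enlarge I P η)).toReal ∧
    ∀ i, |(∫ ω, pay i ω ∂μ) - pr i| < η}

/-- `P̃(G) = lim_{η ↓ 0} sup_{P ∈ M^η} E_P[G]`; since the supremum is monotone in `η`,
the limit equals the infimum over `η > 0`. -/
def Ptilde {ι : Type} (I P : Set (Path T m)) (pay : ι → Path T m → ℝ) (pr : ι → ℝ)
    (G : Path T m → ℝ) : ℝ :=
  sInf {r : ℝ | ∃ η > (0:ℝ), r = Psup (CalibratedEta I P pay pr η) G}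

/-- Bounded-Lipschitz (Lévy–Prokhorov type) distance between measures on `ℝ₊`. -/
def blDist (μ ν : Measure ℝ) : ℝ :=
  ⨆ f : {f : ℝ → ℝ // LipschitzOnWith 1 f (Set.Ici 0) ∧ ∀ x ∈ Set.Ici (0:ℝ), |f x| ≤ 1},
    |(∫ x in Set.Ici (0:ℝ), f.1 x ∂μ) - ∫ x in Set.Ici (0:ℝ), f.1 x ∂ν|

/-- Convex-order increase of a family of measures on `ℝ₊`:
`∫ φ dμ_j ≤ ∫ φ dμ_{j'}` for `j ≤ j'`, for every convex `φ` with finite integrals. -/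
def ConvexOrderIncr {n : ℕ} (μs : Fin (n + 1) → Measure ℝ) : Prop :=
  ∀ φ : ℝ → ℝ, ConvexOn ℝ (Set.Ici 0) φ → (∀ j, IntegrableOn φ (Set.Ici 0) (μs j)) →
    ∀ j j' : Fin (n + 1), j ≤ j' →
      (∫ x in Set.Ici (0:ℝ), φ x ∂(μs j)) ≤ ∫ x in Set.Ici (0:ℝ), φ x ∂(μs j')

/-- `η`-approximate models with exact marginals at the last maturity: the law of
`S^{(i)}_{T_n}` equals `μ^{(i)}_n`, earlier marginals are within `η` in the
bounded-Lipschitz distance, and `P(𝔓^η) ≥ 1 − η`. -/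
def MtildeEta {d K n : ℕ} (Tm : Fin (n + 1) → ℝ) (μs : Fin d → Fin (n + 1) → Measure ℝ)
    (I P : Set (Path T (d + K))) (η : ℝ) : Set (Measure (Path T (d + K))) :=
  {μ | IsMartingaleMeasure μ ∧
    (∀ i : Fin d, μ.map (fun ω => ω.1 (Tm (Fin.last n)) (Fin.castAdd K i)) = μs i (Fin.last n)) ∧
    (∀ i : Fin d, ∀ j : Fin (n + 1), j ≠ Fin.last n →
      blDist (μ.map (fun ω => ω.1 (Tm j) (Fin.castAdd K i))) (μs i j) ≤ η) ∧
    1 - η ≤ (μ (enlarge I P η)).toReal}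

/-- `P̃_{μ,𝔓}(G) = lim_{η↓0} sup_{P ∈ M̃^η_{μ,𝔓}} E_P[G]` (by monotonicity, the limit
equals the infimum over `η > 0`). -/
def PtildeMu {d K n : ℕ} (Tm : Fin (n + 1) → ℝ) (μs : Fin d → Fin (n + 1) → Measure ℝ)
    (I P : Set (Path T (d + K))) (G : Path T (d + K) → ℝ) : ℝ :=
  sInf {r : ℝ | ∃ η > (0:ℝ), r = Psup (MtildeEta Tm μs I P η) G}

/-- Time invariance of a set of paths relative to the maturities `Tm`. -/
def TimeInvariant {n : ℕ} (T : ℝ) (m : ℕ) (Tm : Fin (n + 1) → ℝ) (A : Set (Path T m)) : Prop :=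
  ∀ f : ℝ → ℝ, Monotone f → Continuous f → f 0 = 0 → (∀ j, f (Tm j) = Tm j) →
    ∀ ω ∈ A, ∀ ω' : Path T m, (∀ t ∈ Set.Icc (0:ℝ) T, ω'.1 t = ω.1 (f t)) → ω' ∈ A

/-- The piecewise constant path with value `v k` on `[s k, s (k+1))` for `k < M`,
and value `v (M-1)` at the terminal time `T`. -/
def stepFn (T : ℝ) (m M : ℕ) (s : ℕ → ℝ) (v : ℕ → Fin m → ℝ) : ℝ → Fin m → ℝ :=
  fun t => if t = T then v (M - 1)
    else ∑ k ∈ Finset.range M, Set.indicator (Set.Ico (s k) (s (k + 1))) (fun _ => v k) t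

/-- Sup-norm over `[0,T]` of an arbitrary function of time. -/
def funSup (T : ℝ) {m : ℕ} (f : ℝ → Fin m → ℝ) : ℝ := ⨆ t : Set.Icc (0:ℝ) T, ‖f t.1‖

/-- The `σ`-algebra generated by the `P`-null sets. -/
def nullMS {ΩW : Type} [MeasurableSpace ΩW] (P : Measure ΩW) : MeasurableSpace ΩW :=
  MeasurableSpace.generateFrom {s | P s = 0}

/-- Natural filtration of a process `W`. -/
def natFiltOf {ΩW : Type} [MeasurableSpace ΩW] {E : Type} [MeasurableSpace E]
    (W : ℝ → ΩW → E) (t : ℝ) : MeasurableSpace ΩW :=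
  ⨆ u ∈ Set.Icc (0:ℝ) t, MeasurableSpace.comap (W u) inferInstance

/-- The usual augmentation (by `P`-null sets) of the natural filtration of `W`. -/
def augFiltOf {ΩW : Type} [MeasurableSpace ΩW] {E : Type} [MeasurableSpace E]
    (P : Measure ΩW) (W : ℝ → ΩW → E) (t : ℝ) : MeasurableSpace ΩW :=
  natFiltOf W t ⊔ nullMS P

/-- A finite-dimensional standard Brownian motion: measurable in space, starting at `0`,
with continuous paths, with increments over `[s,t]` distributed as a vector of independent
centred Gaussians of variance `t − s`, independent of the past. -/
def IsBrownianMotion {ΩW : Type} [MeasurableSpace ΩW] (P : Measure ΩW) {k : ℕ}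
    (W : ℝ → ΩW → (Fin k → ℝ)) : Prop :=
  (∀ u : ℝ, Measurable (W u)) ∧
  (∀ᵐ x ∂P, W 0 x = 0) ∧
  (∀ᵐ x ∂P, Continuous fun t => W t x) ∧
  (∀ s t : ℝ, 0 ≤ s → s ≤ t →
    P.map (fun x => W t x - W s x) =
      Measure.pi fun _ : Fin k => ProbabilityTheory.gaussianReal 0 (Real.toNNReal (t - s))) ∧
  (∀ s t : ℝ, 0 ≤ s → s ≤ t →
    ProbabilityTheory.Indep
      (MeasurableSpace.comap (fun x => W t x - W s x) inferInstance) (natFiltOf W s) P)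

/-- Martingale property of `M` with respect to a (raw) filtration `F` under `P`. -/
def MartingaleOn {ΩW : Type} [MeasurableSpace ΩW] (P : Measure ΩW)
    (F : ℝ → MeasurableSpace ΩW) {E : Type} [NormedAddCommGroup E] [NormedSpace ℝ E]
    [CompleteSpace E] (M : ℝ → ΩW → E) : Prop :=
  (∀ t : ℝ, StronglyMeasurable[F t] (M t)) ∧ (∀ t : ℝ, Integrable (M t) P) ∧
    ∀ s t : ℝ, s ≤ t → P[M t | F s] =ᵐ[P] M s

/-- `μ` is the law of a continuous martingale with values in `ℝ₊^m` starting at `(1,…,1)`,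
defined on a complete probability space whose filtration is the usual augmentation of the
natural filtration of a finite-dimensional Brownian motion. -/
def InBrownianClass (μ : Measure (Path T m)) : Prop :=
  ∃ (ΩW : Type) (_mΩ : MeasurableSpace ΩW) (P : Measure ΩW),
    IsProbabilityMeasure P ∧ (∀ s : Set ΩW, P s = 0 → MeasurableSet s) ∧
    ∃ (k : ℕ) (W : ℝ → ΩW → (Fin k → ℝ)), IsBrownianMotion P W ∧
      ∃ Φ : ΩW → Path T m, Measurable Φ ∧ μ = P.map Φ ∧
        MartingaleOn P (augFiltOf P W) (fun t x => (Φ x).1 t)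

/-! A semi-static hedge of `G` on `𝔓^ε` is worth at least `a₀ - B - M` everywhere on `I`
(static options are bounded by `B`, admissible gains by `-M`), while `G ≤ C` and
`λ_𝔓 ≥ ε ∧ 1` off `𝔓^ε`; so for large `N` the same hedge super-replicates `G - N λ_𝔓` on all
of `I`. Conversely, a hedge of `G - N λ_𝔓` on `I` super-replicates `G` on `𝔓^{δ/(N+1)}` at the
extra cost `δ`. Hence the two families of prices have the same lower bounds. -/

theorem csInf_eq_csInf_of_lowerBounds_eq {α : Type*} [ConditionallyCompleteLinearOrder α]
    {s t : Set α} (hs : s.Nonempty) (ht : t.Nonempty) (h : lowerBounds s = lowerBounds t) :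
    sInf s = sInf t := by
  by_cases hbs : BddBelow s
  · have hbt : BddBelow t := by rwa [BddBelow, ← h]
    exact (isGLB_csInf hs hbs).unique ((isGLB_congr h).mpr (isGLB_csInf ht hbt))
  · have hbt : ¬BddBelow t := by rwa [BddBelow, ← h]
    rw [csInf_of_not_bddBelow hbs, csInf_of_not_bddBelow hbt]

/-- The sets `S i` must be all bounded below or all unbounded, since `sInf` of a set of reals
that is unbounded below is `0`. -/
theorem Real.sInf_eq_sInf_image_sInf {ι : Type*} {L : Set ℝ} {s : Set ι} {S : ι → Set ℝ}
    (hs : s.Nonempty) (hS : ∀ i ∈ s, (S i).Nonempty)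
    (hSL : ∀ i ∈ s, ∀ x ∈ S i, ∀ δ > 0, x + δ ∈ L) (hLS : ∀ x ∈ L, ∃ i ∈ s, x ∈ S i)
    (hbdd : ∀ i ∈ s, ∀ j ∈ s, BddBelow (S i) → BddBelow (S j)) :
    sInf L = sInf ((fun i => sInf (S i)) '' s) := by
  have hlower : ∀ b, b ∈ lowerBounds L ↔ ∀ i ∈ s, b ∈ lowerBounds (S i) := by
    refine fun b => ⟨fun hb i hi x hx =>
      le_of_forall_pos_le_add fun δ hδ => hb (hSL i hi x hx δ hδ), fun hb x hx => ?_⟩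
    obtain ⟨i, hi, hxi⟩ := hLS x hx
    exact hb i hi hxi
  obtain ⟨i₀, hi₀⟩ := hs
  obtain ⟨x₀, hx₀⟩ := hS i₀ hi₀
  by_cases hb₀ : BddBelow (S i₀)
  · refine csInf_eq_csInf_of_lowerBounds_eq ⟨_, hSL i₀ hi₀ x₀ hx₀ 1 one_pos⟩ ⟨_, i₀, hi₀, rfl⟩ ?_
    ext b
    rw [hlower, mem_lowerBounds, forall_mem_image]
    exact forall₂_congr fun i hi => (le_csInf_iff (hbdd i₀ hi₀ i hi hb₀) (hS i hi)).symm
  · have hL : ¬BddBelow L := fun ⟨b, hb⟩ => hb₀ ⟨b, (hlower b).mp hb i₀ hi₀⟩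
    have himage : (fun i => sInf (S i)) '' s = {0} := by
      rw [← (Set.nonempty_of_mem hi₀).image_const]
      exact image_congr fun i hi =>
        Real.sInf_of_not_bddBelow fun hbi => hb₀ (hbdd i hi i₀ hi₀ hbi)
    rw [Real.sInf_of_not_bddBelow hL, himage, csInf_singleton]

lemma lamP_nonneg (P : Set (Path T m)) (ω : Path T m) : 0 ≤ lamP P ω :=
  le_min Metric.infDist_nonneg zero_le_one

lemma lamP_le_one (P : Set (Path T m)) (ω : Path T m) : lamP P ω ≤ 1 :=
  min_le_right _ _

lemma enlarge_self (I : Set (Path T m)) {ε : ℝ} (hε : 0 ≤ ε) : enlarge I I ε = I :=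
  Set.sep_eq_self_iff_mem_true.mpr fun _ hω => by rwa [Metric.infDist_zero_of_mem hω]

def SimpleStrategy.zero (hT : 0 < T) : SimpleStrategy T m where
  num _ := 1
  time _ k := if k = 0 then 0 else T
  coeff _ _ := 0
  time_zero _ := if_pos rfl
  time_last _ := if_neg one_ne_zero
  time_mono _ a ha b hb _ := by
    obtain rfl : a = 0 := by simp only [Set.mem_Iic] at ha hb; omega
    obtain rfl : b = 1 := by simp only [Set.mem_Iic] at ha hb; omega
    simpa using hT

@[simp]
lemma SimpleStrategy.zero_gains (hT : 0 < T) (ω : Path T m) (t : ℝ) :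
    (SimpleStrategy.zero hT).gains ω t = 0 := by
  simp [SimpleStrategy.zero, SimpleStrategy.gains]

lemma SimpleStrategy.zero_admissibleOn (hT : 0 < T) (A : Set (Path T m)) :
    (SimpleStrategy.zero hT).AdmissibleOn A :=
  ⟨fun _ _ _ _ _ => by simp [SimpleStrategy.zero, SimpleStrategy.holding],
    1, one_pos, fun _ _ _ _ => by simp⟩

lemma exists_forall_abs_sum_mul_le {α ι : Type*} {n : ℕ} {f : ι → α → ℝ}
    (hf : ∀ i, ∃ C, ∀ x, |f i x| ≤ C) (a : Fin n → ℝ) (idx : Fin n → ι) :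
    ∃ B, ∀ x, |∑ l, a l * f (idx l) x| ≤ B := by
  choose C hC using hf
  refine ⟨∑ l, |a l| * C (idx l), fun x => (Finset.abs_sum_le_sum_abs _ _).trans ?_⟩
  gcongr with l
  rw [abs_mul]
  exact mul_le_mul_of_nonneg_left (hC _ x) (abs_nonneg _)

section HedgeCosts

variable {ι : Type} {I A A' P : Set (Path T m)} {pay : ι → Path T m → ℝ} {pr : ι → ℝ}
  {G G' : Path T m → ℝ} {x c : ℝ}

def semiHedgeCosts (I A : Set (Path T m)) (pay : ι → Path T m → ℝ) (pr : ι → ℝ)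
    (G : Path T m → ℝ) : Set ℝ :=
  {x : ℝ | ∃ (n : ℕ) (a0 : ℝ) (a : Fin n → ℝ) (idx : Fin n → ι),
    x = a0 + ∑ l, a l * pr (idx l) ∧
    ∃ γ : SimpleStrategy T m, γ.AdmissibleOn I ∧
      ∀ ω ∈ A, G ω ≤ (a0 + ∑ l, a l * pay (idx l) ω) + γ.gains ω T}

def approxHedgeCosts (I P : Set (Path T m)) (pay : ι → Path T m → ℝ) (pr : ι → ℝ)
    (G : Path T m → ℝ) : Set ℝ :=
  {x : ℝ | ∃ ε > (0:ℝ), x ∈ semiHedgeCosts I (enlarge I P ε) pay pr G}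

lemma VspSemiApprox_eq_sInf_approxHedgeCosts :
    VspSemiApprox I P pay pr G = sInf (approxHedgeCosts I P pay pr G) := rfl

lemma add_mem_semiHedgeCosts (hA : A ⊆ A') (hG : ∀ ω ∈ A, G ω ≤ G' ω + c)
    (hx : x ∈ semiHedgeCosts I A' pay pr G') : x + c ∈ semiHedgeCosts I A pay pr G := by
  obtain ⟨n, a0, a, idx, rfl, γ, hγ, hedge⟩ := hx
  refine ⟨n, a0 + c, a, idx, by ring, γ, hγ, fun ω hω => ?_⟩
  linarith [hG ω hω, hedge ω (hA hω)]

lemma const_mem_approxHedgeCosts (hT : 0 < T) (hC : ∀ ω, G ω ≤ c) :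
    c ∈ approxHedgeCosts I P pay pr G :=
  ⟨1, one_pos, 0, c, Fin.elim0, Fin.elim0, by simp, SimpleStrategy.zero hT,
    SimpleStrategy.zero_admissibleOn hT I, fun ω _ => by simpa using hC ω⟩

lemma add_mem_approxHedgeCosts_of_le (hGG' : ∀ ω, G ω ≤ G' ω + c)
    (hx : x ∈ approxHedgeCosts I P pay pr G') : x + c ∈ approxHedgeCosts I P pay pr G := by
  obtain ⟨ε, hε, hxε⟩ := hx
  exact ⟨ε, hε, add_mem_semiHedgeCosts subset_rfl (fun ω _ => hGG' ω) hxε⟩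

lemma add_mem_approxHedgeCosts_of_penalized {N δ : ℝ} (hN : 0 ≤ N) (hδ : 0 < δ)
    (hx : x ∈ approxHedgeCosts I I pay pr (fun ω => G ω - N * lamP P ω)) :
    x + δ ∈ approxHedgeCosts I P pay pr G := by
  obtain ⟨ε, hε, hxε⟩ := hx
  have hη : 0 < δ / (N + 1) := by positivity
  refine ⟨δ / (N + 1), hη, add_mem_semiHedgeCosts ?_ ?_ hxε⟩
  · rw [enlarge_self I hε.le]
    exact Set.sep_subset I _
  · rintro ω ⟨-, hω⟩
    have hlam : N * lamP P ω ≤ δ :=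
      calc N * lamP P ω ≤ (N + 1) * (δ / (N + 1)) :=
            mul_le_mul (by linarith) ((min_le_left _ _).trans hω) (lamP_nonneg P ω) (by linarith)
        _ = δ := by field_simp
    linarith

lemma exists_penalized_of_mem_approxHedgeCosts (hT : 0 < T)
    (hpay : ∀ i, ∃ C, ∀ ω, |pay i ω| ≤ C) (hC : ∀ ω, G ω ≤ c)
    (hx : x ∈ approxHedgeCosts I P pay pr G) :
    ∃ N, 0 ≤ N ∧ x ∈ approxHedgeCosts I I pay pr (fun ω => G ω - N * lamP P ω) := by
  obtain ⟨ε, hε, n, a0, a, idx, hxeq, γ, ⟨hna, M, hM, hgains⟩, hedge⟩ := hx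
  obtain ⟨B, hB⟩ := exists_forall_abs_sum_mul_le hpay a idx
  have he : 0 < min ε 1 := lt_min hε one_pos
  set N := max 0 ((c + B + M - a0) / min ε 1)
  refine ⟨N, le_max_left _ _, ε, hε, n, a0, a, idx, hxeq, γ, ⟨hna, M, hM, hgains⟩, ?_⟩
  rintro ω ⟨hωI, -⟩
  have hpenalty : 0 ≤ N * lamP P ω := mul_nonneg (le_max_left _ _) (lamP_nonneg P ω)
  by_cases hω : Metric.infDist ω P ≤ ε
  · linarith [hedge ω ⟨hωI, hω⟩]
  · have hlarge : c + B + M - a0 ≤ N * lamP P ω :=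
      calc c + B + M - a0 = (c + B + M - a0) / min ε 1 * min ε 1 := by field_simp
        _ ≤ N * lamP P ω := by
          gcongr
          · exact le_max_right _ _
          · exact min_le_min (not_le.mp hω).le le_rfl
    linarith [hC ω, neg_abs_le (∑ l, a l * pay (idx l) ω), hB ω,
      hgains ω hωI T ⟨hT.le, le_rfl⟩]

end HedgeCosts

theorem statement3_general (T : ℝ) (hT : 0 < T) (d K : ℕ)
    (Xc : Fin K → (Fin d → ℝ) → ℝ) (pc : Fin K → ℝ)
    (ι : Type) (pay : ι → Path T (d + K) → ℝ) (pr : ι → ℝ)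
    (hpaybd : ∀ i, ∃ C, ∀ ω, |pay i ω| ≤ C)
    (Pred : Set (Path T (d + K)))
    (G : Path T (d + K) → ℝ) (hGbd : ∃ C, ∀ ω, |G ω| ≤ C) :
    VspSemiApprox (InfoSpace T d K Xc pc) Pred pay pr G =
      sInf {r : ℝ | ∃ N : ℝ, 0 ≤ N ∧
        r = VspSemiApprox (InfoSpace T d K Xc pc) (InfoSpace T d K Xc pc) pay pr
              (fun ω => G ω - N * lamP Pred ω)} := by
  obtain ⟨C, hC⟩ := hGbd
  have hGC : ∀ ω, G ω ≤ C := fun ω => (abs_le.mp (hC ω)).2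
  set I := InfoSpace T d K Xc pc
  simp_rw [VspSemiApprox_eq_sInf_approxHedgeCosts]
  set S : ℝ → Set ℝ := fun N => approxHedgeCosts I I pay pr fun ω => G ω - N * lamP Pred ω
  have hshift : ∀ N N', ∀ x ∈ S N', x + |N' - N| ∈ S N := fun N N' x =>
    add_mem_approxHedgeCosts_of_le fun ω => by
      have := mul_le_mul (le_abs_self (N' - N)) (lamP_le_one Pred ω) (lamP_nonneg Pred ω)
        (abs_nonneg _)
      linarith
  have hrange : {r : ℝ | ∃ N : ℝ, 0 ≤ N ∧ r = sInf (S N)} = (fun N => sInf (S N)) '' Set.Ici 0 := by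
    ext r
    simp [eq_comm]
  rw [hrange]
  refine Real.sInf_eq_sInf_image_sInf ⟨0, Set.self_mem_Ici⟩
    (fun N hN => ⟨C, const_mem_approxHedgeCosts hT fun ω => ?_⟩)
    (fun N hN x hx δ hδ => add_mem_approxHedgeCosts_of_penalized hN hδ hx)
    (fun x hx => exists_penalized_of_mem_approxHedgeCosts hT hpaybd hGC hx)
    (fun N _ N' _ ⟨b, hb⟩ => ⟨b - |N' - N|, fun x hx => ?_⟩)
  · nlinarith [hGC ω, lamP_nonneg Pred ω, mem_Ici.mp hN]
  · linarith [hb (hshift N N' x hx)]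

theorem statement3 (T : ℝ) (hT : 0 < T) (d K : ℕ) (hd : 1 ≤ d)
    (Xc : Fin K → (Fin d → ℝ) → ℝ) (pc : Fin K → ℝ) (hopt : OptionData d K Xc pc)
    (ι : Type) (pay : ι → Path T (d + K) → ℝ) (pr : ι → ℝ)
    (hpaybd : ∀ i, ∃ C, ∀ ω, |pay i ω| ≤ C) (hpayuc : ∀ i, UniformContinuous (pay i))
    (Pred : Set (Path T (d + K))) (hPredm : MeasurableSet Pred)
    (hPredI : Pred ⊆ InfoSpace T d K Xc pc)
    (G : Path T (d + K) → ℝ) (hGmeas : Measurable G) (hGbd : ∃ C, ∀ ω, |G ω| ≤ C) :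
    VspSemiApprox (InfoSpace T d K Xc pc) Pred pay pr G =
      sInf {r : ℝ | ∃ N : ℝ, 0 ≤ N ∧
        r = VspSemiApprox (InfoSpace T d K Xc pc) (InfoSpace T d K Xc pc) pay pr
              (fun ω => G ω - N * lamP Pred ω)} :=
  statement3_general T hT d K Xc pc ι pay pr hpaybd Pred G hGbd

end RobustFinance
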